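/- Let 𝔄 and 𝔅 be Boolean algebras, K = St(𝔄), L = St(𝔅), and suppose T : C(K) → C(L) is a bounded linear embedding. Let 𝒜 be the linear span over ℚ of the sequences of simple rational functions with coefficients in [0,1] that converge in C(K). Then there is a linear map φ from 𝒜 into the space of ω-sequences of simple rational functions on L such that: φ maps convergent sequences to convergent sequences, φ maps sequences converging to 0 to sequences converging to 0, and for every f̄ = ⟨f_n⟩ ∈ 𝒜 with f = lim_n f_n, we have lim_n φ(f̄)_n = T(f). -/
import Mathlib


open Filter

/-- `f` is a simple function with rational coefficients on `K`:
`f = Σ_i q_i · χ_{[a_i]}` with `q_i ∈ ℚ` and `[a_i]` clopen. -/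
def IsSimpleRat {K : Type*} [TopologicalSpace K] (f : C(K, ℝ)) : Prop :=
  ∃ (m : ℕ) (q : Fin m → ℚ) (a : Fin m → Set K),
    (∀ i, IsClopen (a i)) ∧
    ∀ x, f x = ∑ i, (q i : ℝ) * (a i).indicator (1 : K → ℝ) x

/-- `f` is simple rational with coefficients in `[0,1]`. -/
def IsSimpleRat01 {K : Type*} [TopologicalSpace K] (f : C(K, ℝ)) : Prop :=
  ∃ (m : ℕ) (q : Fin m → ℚ) (a : Fin m → Set K),
    (∀ i, IsClopen (a i)) ∧ (∀ i, 0 ≤ (q i : ℝ) ∧ (q i : ℝ) ≤ 1) ∧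
    ∀ x, f x = ∑ i, (q i : ℝ) * (a i).indicator (1 : K → ℝ) x

/-- `𝒜`: the (rational) linear span, inside the space of `ω`-sequences of
functions, of the convergent sequences of simple rational functions with
coefficients in `[0,1]`. -/
noncomputable def spanA (K : Type*) [TopologicalSpace K] [CompactSpace K] :
    Submodule ℚ (ℕ → C(K, ℝ)) :=
  Submodule.span ℚ {fbar : ℕ → C(K, ℝ) |
    (∀ n, IsSimpleRat01 (fbar n)) ∧ ∃ g, Tendsto fbar atTop (nhds g)}

section Aux

variable {L : Type*} [TopologicalSpace L]

noncomputable def SRsub (L : Type*) [TopologicalSpace L] : Submodule ℚ C(L, ℝ) where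
  carrier := {f | IsSimpleRat f}
  zero_mem' := ⟨0, Fin.elim0, Fin.elim0, by simp, by simp⟩
  add_mem' := by
    rintro f g ⟨m, q, a, ha, hf⟩ ⟨m', q', a', ha', hg⟩
    refine ⟨m + m', Fin.append q q', Fin.append a a', ?_, ?_⟩
    · intro i
      refine Fin.addCases (fun j => ?_) (fun j => ?_) i
      · rw [Fin.append_left]; exact ha j
      · rw [Fin.append_right]; exact ha' j
    · intro x
      rw [Fin.sum_univ_add]
      simp only [Fin.append_left, Fin.append_right]
      exact congrArg₂ (· + ·) (hf x) (hg x) |>.symm ▸ rfl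
  smul_mem' := by
    rintro c f ⟨m, q, a, ha, hf⟩
    refine ⟨m, fun i => c * q i, a, ha, fun x => ?_⟩
    have : (c • f) x = (c : ℝ) * f x := by
      rw [ContinuousMap.smul_apply, Rat.smul_def]
    rw [this, hf x, Finset.mul_sum]
    simp [mul_assoc]

noncomputable def indCM {s : Set L} (hs : IsClopen s) : C(L, ℝ) :=
  ⟨s.indicator 1, continuous_indicator (by simp [hs]) continuous_const.continuousOn⟩

variable [CompactSpace L] [T2Space L] [TotallyDisconnectedSpace L]

lemma dense_SR (h : C(L, ℝ)) {ε : ℝ} (hε : 0 < ε) :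
    ∃ f : C(L, ℝ), IsSimpleRat f ∧ ‖f - h‖ < ε := by
  classical
  have hε3 : (0:ℝ) < ε / 3 := by positivity
  have hU : ∀ x : L, ∃ V : Set L, IsClopen V ∧ x ∈ V ∧
      V ⊆ h ⁻¹' Metric.ball (h x) (ε / 3) :=
    fun x => compact_exists_isClopen_in_isOpen
      ((Metric.isOpen_ball).preimage h.continuous)
      (by simpa [Metric.mem_ball] using hε3)
  choose U hUc hUx hUsub using hU
  obtain ⟨t, ht⟩ := IsCompact.elim_finite_subcover isCompact_univ U
    (fun x => (hUc x).2) (fun x _ => Set.mem_iUnion.2 ⟨x, hUx x⟩)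
  set m := t.card
  set e : Fin m → L := fun i => (t.equivFin.symm i : L) with he
  set V : Fin m → Set L := fun i => U (e i) \ ⋃ (j : Fin m) (_ : j < i), U (e j) with hV
  have hVc : ∀ i, IsClopen (V i) :=
    fun i => (hUc (e i)).diff (Set.Finite.isClopen_biUnion (Set.toFinite _)
      (fun j _ => hUc (e j)))
  have hcover : ∀ y : L, ∃ i, y ∈ V i ∧ ∀ j, j ≠ i → y ∉ V j := by
    intro y
    have hex : ∃ i : Fin m, y ∈ U (e i) := by
      obtain ⟨x, hx, hy⟩ := Set.mem_iUnion₂.1 (ht (Set.mem_univ y))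
      exact ⟨t.equivFin ⟨x, hx⟩, by simpa [he] using hy⟩
    set s : Finset (Fin m) := Finset.univ.filter (fun i => y ∈ U (e i)) with hs
    have hsne : s.Nonempty := ⟨hex.choose, by simp [hs, hex.choose_spec]⟩
    set i := s.min' hsne with hi
    have hiU : y ∈ U (e i) := by
      have := s.min'_mem hsne
      simpa [hs] using this
    have hiV : y ∈ V i := by
      refine ⟨hiU, ?_⟩
      simp only [Set.mem_iUnion, not_exists]
      intro j hj hyj
      exact absurd (s.min'_le j (by simp [hs, hyj])) (not_le.2 hj)
    refine ⟨i, hiV, fun j hj hyVj => ?_⟩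
    rcases lt_or_gt_of_ne hj with hlt | hgt
    · exact hiV.2 (Set.mem_iUnion.2 ⟨j, Set.mem_iUnion.2 ⟨hlt, hyVj.1⟩⟩)
    · exact hyVj.2 (Set.mem_iUnion.2 ⟨i, Set.mem_iUnion.2 ⟨hgt, hiU⟩⟩)
  have hq : ∀ i : Fin m, ∃ q : ℚ, |h (e i) - q| < ε / 3 :=
    fun i => exists_rat_near _ hε3
  choose q hqn using hq
  set f : C(L, ℝ) := ∑ i, (q i : ℝ) • indCM (hVc i) with hf
  have hfval : ∀ y, f y = ∑ i, (q i : ℝ) * (V i).indicator (1 : L → ℝ) y := by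
    intro y
    simp [hf, indCM, ContinuousMap.sum_apply]
  refine ⟨f, ⟨m, q, V, hVc, hfval⟩, ?_⟩
  rw [ContinuousMap.norm_lt_iff _ hε]
  intro y
  obtain ⟨i, hiV, huniq⟩ := hcover y
  have hfy : f y = (q i : ℝ) := by
    rw [hfval y, Finset.sum_eq_single i]
    · simp [Set.indicator_of_mem hiV]
    · intro j _ hj
      simp [Set.indicator_of_notMem (huniq j hj)]
    · simp
  have h1 : |(q i : ℝ) - h (e i)| < ε / 3 := by
    rw [abs_sub_comm]; exact hqn i
  have h2 : |h (e i) - h y| < ε / 3 := by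
    have := hUsub (e i) hiV.1
    rw [Set.mem_preimage, Metric.mem_ball, Real.dist_eq] at this
    rw [abs_sub_comm]; exact this
  have heq : ‖f y - h y‖ = |(q i : ℝ) - h y| := by rw [hfy]; rfl
  rw [ContinuousMap.sub_apply, heq]
  calc |(q i : ℝ) - h y| ≤ |(q i : ℝ) - h (e i)| + |h (e i) - h y| := abs_sub_le _ _ _
    _ < ε / 3 + ε / 3 := by linarith
    _ < ε := by linarith

/-- a chosen sequence of simple rational functions converging to `h` -/
noncomputable def seqSR (h : C(L, ℝ)) : ℕ → C(L, ℝ) :=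
  fun n => (dense_SR h (by positivity : (0:ℝ) < 1 / (n + 1))).choose

lemma seqSR_isSimpleRat (h : C(L, ℝ)) (n : ℕ) : IsSimpleRat (seqSR h n) :=
  (dense_SR h (by positivity : (0:ℝ) < 1 / (n + 1))).choose_spec.1

lemma seqSR_tendsto (h : C(L, ℝ)) : Tendsto (seqSR h) atTop (nhds h) := by
  rw [tendsto_iff_norm_sub_tendsto_zero]
  have hb : ∀ n : ℕ, ‖seqSR h n - h‖ ≤ 1 / (n + 1) := fun n =>
    le_of_lt (dense_SR h (by positivity : (0:ℝ) < 1 / (n + 1))).choose_spec.2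
  exact squeeze_zero (fun n => norm_nonneg _) hb
    tendsto_one_div_add_atTop_nhds_zero_nat

end Aux

section Lim

variable {K : Type*} [TopologicalSpace K] [CompactSpace K] [T2Space K]

lemma spanA_conv (x : ℕ → C(K, ℝ)) (hx : x ∈ spanA K) :
    ∃ g, Tendsto x atTop (nhds g) := by
  refine Submodule.span_induction (fun y hy => hy.2) ⟨0, tendsto_const_nhds⟩
    (fun y z _ _ ⟨gy, hgy⟩ ⟨gz, hgz⟩ => ⟨gy + gz, by
      have := hgy.add hgz
      exact this.congr (fun n => rfl)⟩)
    (fun c y _ ⟨gy, hgy⟩ => ⟨c • gy, by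
      have h1 : Tendsto (fun n => (c : ℝ) • y n) atTop (nhds ((c : ℝ) • gy)) :=
        hgy.const_smul _
      have h2 : (fun n => (c : ℝ) • y n) = fun n => (c • y) n := by
        funext n
        simp [Rat.cast_smul_eq_qsmul ℝ]
      have h3 : (c : ℝ) • gy = c • gy := Rat.cast_smul_eq_qsmul ℝ c gy
      rw [h2, h3] at h1
      exact h1⟩) hx

noncomputable def limMap : ↥(spanA K) →ₗ[ℚ] C(K, ℝ) where
  toFun x := (spanA_conv x.1 x.2).choose
  map_add' x y := by
    have hx := (spanA_conv x.1 x.2).choose_spec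
    have hy := (spanA_conv y.1 y.2).choose_spec
    have hxy := (spanA_conv (x + y).1 (x + y).2).choose_spec
    refine tendsto_nhds_unique hxy ?_
    exact (hx.add hy).congr (fun n => rfl)
  map_smul' c x := by
    have hx := (spanA_conv x.1 x.2).choose_spec
    have hcx := (spanA_conv (c • x).1 (c • x).2).choose_spec
    refine tendsto_nhds_unique hcx ?_
    have h1 : Tendsto (fun n => (c : ℝ) • (x : ℕ → C(K, ℝ)) n) atTop
        (nhds ((c : ℝ) • (spanA_conv x.1 x.2).choose)) := hx.const_smul _
    have h2 : (fun n => (c : ℝ) • (x : ℕ → C(K, ℝ)) n)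
        = ((c • x : ↥(spanA K)) : ℕ → C(K, ℝ)) := by
      funext n
      simp [Rat.cast_smul_eq_qsmul ℝ]
    have h3 : (c : ℝ) • (spanA_conv x.1 x.2).choose
        = c • (spanA_conv x.1 x.2).choose := Rat.cast_smul_eq_qsmul ℝ _ _
    rw [h2, h3] at h1
    simpa using h1

lemma limMap_spec (x : ↥(spanA K)) :
    Tendsto (x : ℕ → C(K, ℝ)) atTop (nhds (limMap x)) :=
  (spanA_conv x.1 x.2).choose_spec

end Lim


/-- If `T : C(K) → C(L)` is a bounded linear embedding of Banach spaces (`K`,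
`L` Stone spaces), then there is a linear map `φ` from `𝒜` into the sequences
of simple rational functions on `L` mapping convergent sequences to convergent
sequences, null sequences to null sequences, and such that
`lim φ(f̄) = T(lim f̄)`. -/
theorem stmt15 {K L : Type*}
    [TopologicalSpace K] [CompactSpace K] [T2Space K] [TotallyDisconnectedSpace K]
    [TopologicalSpace L] [CompactSpace L] [T2Space L] [TotallyDisconnectedSpace L]
    (T : C(K, ℝ) →L[ℝ] C(L, ℝ)) (hT : Function.Injective T) :
    ∃ φ : ↥(spanA K) →ₗ[ℚ] (ℕ → C(L, ℝ)),
      (∀ (x : ↥(spanA K)) (n : ℕ), IsSimpleRat (φ x n)) ∧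
      (∀ x : ↥(spanA K), (∃ g, Tendsto (x : ℕ → C(K, ℝ)) atTop (nhds g)) →
        ∃ h, Tendsto (φ x) atTop (nhds h)) ∧
      (∀ x : ↥(spanA K), Tendsto (x : ℕ → C(K, ℝ)) atTop (nhds 0) →
        Tendsto (φ x) atTop (nhds 0)) ∧
      (∀ (x : ↥(spanA K)) (g : C(K, ℝ)),
        Tendsto (x : ℕ → C(K, ℝ)) atTop (nhds g) →
        Tendsto (φ x) atTop (nhds (T g))) := by
  classical
  set b := Module.Basis.ofVectorSpace ℚ ↥(spanA K) with hb
  set φ : ↥(spanA K) →ₗ[ℚ] (ℕ → C(L, ℝ)) :=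
    b.constr ℚ (fun i => seqSR (T (limMap (b i)))) with hφ
  have hbasis : ∀ i, φ (b i) = seqSR (T (limMap (b i))) := fun i =>
    b.constr_basis ℚ _ i
  -- key: simple rationality
  have key1 : ∀ (x : ↥(spanA K)) (n : ℕ), IsSimpleRat (φ x n) := by
    have hQ : (⊤ : Submodule ℚ ↥(spanA K)) ≤
        Submodule.comap φ (Submodule.pi Set.univ (fun _ : ℕ => SRsub L)) := by
      rw [← b.span_eq]
      refine Submodule.span_le.2 ?_
      rintro _ ⟨i, rfl⟩
      intro n _
      rw [hbasis i]
      exact seqSR_isSimpleRat _ n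
    intro x n
    exact hQ (Submodule.mem_top) n (Set.mem_univ n)
  -- key: convergence to T (limMap x)
  have key : ∀ x : ↥(spanA K), Tendsto (φ x) atTop (nhds (T (limMap x))) := by
    set Q : Submodule ℚ ↥(spanA K) :=
      { carrier := {x | Tendsto (φ x) atTop (nhds (T (limMap x)))}
        zero_mem' := by
          simp only [Set.mem_setOf_eq, map_zero]
          exact tendsto_const_nhds
        add_mem' := by
          intro x y hx hy
          simp only [Set.mem_setOf_eq, map_add] at *
          exact (hx.add hy).congr (fun n => rfl)
        smul_mem' := by
          intro c x hx
          simp only [Set.mem_setOf_eq, map_smul] at *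
          have h1 : Tendsto (fun n => (c : ℝ) • φ x n) atTop
              (nhds ((c : ℝ) • T (limMap x))) := hx.const_smul _
          have h2 : (fun n => (c : ℝ) • φ x n) = fun n => (c • φ x) n := by
            funext n
            simp [Rat.cast_smul_eq_qsmul ℝ]
          have h3 : (c : ℝ) • T (limMap x) = T (c • limMap x) := by
            rw [← map_smul T, Rat.cast_smul_eq_qsmul ℝ]
          rw [h2, h3] at h1
          exact h1 } with hQdef
    have hQtop : (⊤ : Submodule ℚ ↥(spanA K)) ≤ Q := by
      rw [← b.span_eq]
      refine Submodule.span_le.2 ?_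
      rintro _ ⟨i, rfl⟩
      show Tendsto (φ (b i)) atTop (nhds (T (limMap (b i))))
      rw [hbasis i]
      exact seqSR_tendsto _
    exact fun x => hQtop Submodule.mem_top
  refine ⟨φ, key1, fun x _ => ⟨T (limMap x), key x⟩, ?_, ?_⟩
  · intro x hx0
    have hl0 : limMap x = 0 := tendsto_nhds_unique (limMap_spec x) hx0
    have hk := key x
    rwa [hl0, map_zero] at hk
  · intro x g hg
    have : limMap x = g := tendsto_nhds_unique (limMap_spec x) hg
    rw [← this]
    exact key x
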